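/- Suppose m = (m_{ij}) satisfies the conditions of the discrete Riemann–Hilbert problem associated to the Plancherel data (with parameter η > 0). Define p₁₁(u) = m₁₁(u) η^u / Γ(u+1/2), p₂₁(u) = m₂₁(u) η^u / Γ(u+1/2), p₁₂(u) = m₁₂(u) η^{−u} / Γ(−u+1/2), p₂₂(u) = m₂₂(u) η^{−u} / Γ(−u+1/2). Then each p_{ij} extends to an entire function on ℂ, and for every half-integer x ∈ ℤ′ one has p₁₁(x) = (−1)^{x−1/2} p₁₂(x) and p₂₁(x) = (−1)^{x−1/2} p₂₂(x). -/

import Mathlib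

noncomputable section

open scoped Topology

/-- The positive half-integers ℤ′₊ = {1/2, 3/2, …}, as a subset of ℂ. -/
def Zp : Set ℂ := {u | ∃ n : ℕ, u = (n : ℂ) + 1/2}

/-- The negative half-integers ℤ′₋ = {−1/2, −3/2, …}, as a subset of ℂ. -/
def Zm : Set ℂ := {u | ∃ n : ℕ, u = -((n : ℂ) + 1/2)}

/-- Plancherel data: `hI η x = η^x / Γ(x + 1/2)`, where `η^x = exp(x log η)`. -/
def hI (η : ℝ) (x : ℂ) : ℂ := Complex.exp (x * Real.log η) / Complex.Gamma (x + 1/2)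

/-- Plancherel data: `hII η x = η^{−x} / Γ(−x + 1/2)`. -/
def hII (η : ℝ) (x : ℂ) : ℂ := Complex.exp (-x * Real.log η) / Complex.Gamma (-x + 1/2)

/-- The 2×2 matrix function `m = (m_{ij})` satisfies the conditions of the discrete
Riemann–Hilbert problem associated to the Plancherel data with parameter `η`:
`m₁₁, m₂₁` are analytic off ℤ′₋ with at most simple poles at ℤ′₋, `m₁₂, m₂₂` are analytic
off ℤ′₊ with at most simple poles at ℤ′₊, and the residues (limits of `(u−x)·m_{ij}(u)`)
are as prescribed. -/
def PlancherelDRHP (η : ℝ) (m11 m12 m21 m22 : ℂ → ℂ) : Prop :=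
  (∀ z ∉ Zm, AnalyticAt ℂ m11 z) ∧
  (∀ z ∉ Zm, AnalyticAt ℂ m21 z) ∧
  (∀ z ∉ Zp, AnalyticAt ℂ m12 z) ∧
  (∀ z ∉ Zp, AnalyticAt ℂ m22 z) ∧
  (∀ x ∈ Zm, Filter.Tendsto (fun u => (u - x) * m11 u) (𝓝[≠] x)
    (𝓝 (-(hII η x) ^ 2 * m12 x))) ∧
  (∀ x ∈ Zm, Filter.Tendsto (fun u => (u - x) * m21 u) (𝓝[≠] x)
    (𝓝 (-(hII η x) ^ 2 * m22 x))) ∧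
  (∀ x ∈ Zp, Filter.Tendsto (fun u => (u - x) * m12 u) (𝓝[≠] x)
    (𝓝 (-(hI η x) ^ 2 * m11 x))) ∧
  (∀ x ∈ Zp, Filter.Tendsto (fun u => (u - x) * m22 u) (𝓝[≠] x)
    (𝓝 (-(hI η x) ^ 2 * m21 x)))

/-!
The entire function `hI η u = η^u / Γ(u + 1/2)` has simple zeros exactly at ℤ′₋, where `m₁₁` has
at most simple poles, so `m₁₁ · hI η` has removable singularities, with value
`Res_x m₁₁ · (hI η)'(x) = -hII(x)² m₁₂(x) (hI η)'(x)` at `x ∈ ℤ′₋`. The recursion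
`1/Γ(s) = s/Γ(s+1)` gives `(1/Γ)'(-n) = (-1)ⁿ n!`, hence `hII(x) (hI η)'(x) = (-1)ⁿ` at
`x = -(n + 1/2)`: this is the sign in the jump relation. Since `hII η u = hI η (-u)`, the same
argument applies to `m₁₂, m₂₂` at ℤ′₊.
-/

open Filter Topology Complex

open scoped Nat

/-- `f * g`, redefined at each zero `x` of `g` as `r x * deriv g x`. When `f` has at most a simple
pole at `x` with residue `r x`, this is the limit of `f * g` at `x`. -/
def mulExtend (f g r : ℂ → ℂ) (z : ℂ) : ℂ :=
  if g z = 0 then r z * deriv g z else f z * g z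

theorem analyticAt_of_simplePole_mul_zero {f g q : ℂ → ℂ} {x c : ℂ}
    (hf : ∀ᶠ u in 𝓝[≠] x, AnalyticAt ℂ f u)
    (hc : Tendsto (fun u => (u - x) * f u) (𝓝[≠] x) (𝓝 c))
    (hg : AnalyticAt ℂ g x) (hgx : g x = 0)
    (hq : q =ᶠ[𝓝[≠] x] f * g) (hqx : q x = c * deriv g x) :
    AnalyticAt ℂ q x := by
  set F := Function.update (fun u => (u - x) * f u) x c
  have hF : AnalyticAt ℂ F x := by
    refine analyticAt_of_differentiable_on_punctured_nhds_of_continuousAt ?_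
      (continuousAt_update_same.2 hc)
    filter_upwards [hf, self_mem_nhdsWithin] with u hu hux
    refine ((differentiableAt_id.sub_const x).mul hu.differentiableAt).congr_of_eventuallyEq ?_
    filter_upwards [eventually_ne_nhds hux] with v hv
    exact Function.update_of_ne hv _ _
  have hG : AnalyticAt ℂ (dslope g x) x :=
    let ⟨_, hp⟩ := hg; ⟨_, hp.has_fpower_series_dslope_fslope⟩
  refine (hF.mul hG).congr (eventuallyEq_nhds_of_eventuallyEq_nhdsNE ?_ ?_).symm
  · filter_upwards [hq, self_mem_nhdsWithin] with u hqu hux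
    have hslope := sub_smul_dslope g x u
    rw [smul_eq_mul, hgx, sub_zero] at hslope
    rw [hqu, Pi.mul_apply, Pi.mul_apply, ← hslope]
    simp only [F, Function.update_of_ne hux]
    ring
  · simp [F, hqx, dslope_same]

theorem eventually_ne_zero_nhdsNE {g : ℂ → ℂ} (hg : Differentiable ℂ g) (hg0 : ∃ z, g z ≠ 0)
    (x : ℂ) : ∀ᶠ u in 𝓝[≠] x, g u ≠ 0 := by
  refine (hg.analyticAt x).eventually_eq_zero_or_eventually_ne_zero.resolve_left fun h => ?_
  obtain ⟨z, hz⟩ := hg0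
  have hg' : AnalyticOnNhd ℂ g Set.univ := hg.differentiableOn.analyticOnNhd isOpen_univ
  exact hz (hg'.eqOn_zero_of_preconnected_of_eventuallyEq_zero isPreconnected_univ
    (Set.mem_univ x) h (Set.mem_univ z))

theorem analyticAt_mulExtend {f g r : ℂ → ℂ} (hg : Differentiable ℂ g) (hg0 : ∃ z, g z ≠ 0)
    (hf : ∀ z, g z ≠ 0 → AnalyticAt ℂ f z)
    (hr : ∀ x, g x = 0 → Tendsto (fun u => (u - x) * f u) (𝓝[≠] x) (𝓝 (r x))) (z : ℂ) :
    AnalyticAt ℂ (mulExtend f g r) z := by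
  have hne := eventually_ne_zero_nhdsNE hg hg0 z
  by_cases hz : g z = 0
  · exact analyticAt_of_simplePole_mul_zero (hne.mono hf) (hr z hz) (hg.analyticAt z) hz
      (hne.mono fun u hu => if_neg hu) (if_pos hz)
  · refine ((hf z hz).mul (hg.analyticAt z)).congr ?_
    filter_upwards [hg.continuous.continuousAt.eventually_ne hz] with u hu
    exact (if_neg hu).symm

theorem inv_Gamma_eq_mul_inv_Gamma_add_one (s : ℂ) : (Gamma s)⁻¹ = s * (Gamma (s + 1))⁻¹ := by
  rcases eq_or_ne s 0 with rfl | hs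
  · simp [Gamma_zero]
  · rw [Gamma_add_one s hs, mul_inv, ← mul_assoc, mul_inv_cancel₀ hs, one_mul]

theorem deriv_inv_Gamma (s : ℂ) :
    deriv (fun s => (Gamma s)⁻¹) s =
      (Gamma (s + 1))⁻¹ + s * deriv (fun s => (Gamma s)⁻¹) (s + 1) := by
  have h := (hasDerivAt_id s).mul
    ((differentiable_one_div_Gamma (s + 1)).hasDerivAt.comp_add_const s 1)
  simpa using (h.congr_of_eventuallyEq (.of_forall inv_Gamma_eq_mul_inv_Gamma_add_one)).deriv

theorem deriv_inv_Gamma_neg_nat (n : ℕ) :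
    deriv (fun s => (Gamma s)⁻¹) (-n) = (-1) ^ n * n ! := by
  induction n with
  | zero => rw [Nat.cast_zero, neg_zero, deriv_inv_Gamma]; simp
  | succ n ih =>
    rw [deriv_inv_Gamma, show -((n + 1 : ℕ) : ℂ) + 1 = -n by push_cast; ring, ih,
      Gamma_neg_nat_eq_zero, inv_zero, Nat.factorial_succ]
    push_cast
    ring

section Plancherel

variable (η : ℝ)

theorem hII_apply (z : ℂ) : hII η z = hI η (-z) := rfl

theorem hI_eq_mul_inv_Gamma : hI η = fun z => exp (z * Real.log η) * (Gamma (z + 1/2))⁻¹ :=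
  funext fun _ => div_eq_mul_inv _ _

theorem differentiable_hI : Differentiable ℂ (hI η) := by
  rw [hI_eq_mul_inv_Gamma]
  exact ((differentiable_id.mul_const _).cexp).mul
    (differentiable_one_div_Gamma.comp (differentiable_id.add_const _))

theorem differentiable_hII : Differentiable ℂ (hII η) :=
  (differentiable_hI η).comp differentiable_neg

theorem hI_eq_zero_iff (z : ℂ) : hI η z = 0 ↔ z ∈ Zm := by
  rw [hI, div_eq_zero_iff, or_iff_right (exp_ne_zero _), Gamma_eq_zero_iff]
  exact exists_congr fun n => ⟨fun h => by linear_combination h, fun h => by linear_combination h⟩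

theorem hII_eq_zero_iff (z : ℂ) : hII η z = 0 ↔ z ∈ Zp := by
  rw [hII_apply, hI_eq_zero_iff]
  exact exists_congr fun n => neg_inj

theorem hI_natCast_add_half (n : ℕ) :
    hI η (n + 1/2) = exp ((n + 1/2) * Real.log η) / n ! := by
  rw [hI, add_assoc, add_halves, Gamma_nat_eq_factorial]

theorem hI_natCast_add_half_ne_zero (n : ℕ) : hI η (n + 1/2) ≠ 0 := by
  rw [hI_natCast_add_half]
  exact div_ne_zero (exp_ne_zero _) (Nat.cast_ne_zero.2 n.factorial_ne_zero)

theorem deriv_hI (z : ℂ) :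
    deriv (hI η) z = exp (z * Real.log η) *
      (Real.log η * (Gamma (z + 1/2))⁻¹ + deriv (fun s => (Gamma s)⁻¹) (z + 1/2)) := by
  have hexp := ((hasDerivAt_id' z).mul_const (Real.log η : ℂ)).cexp
  have hinv := (differentiable_one_div_Gamma (z + 1/2)).hasDerivAt.comp_add_const z (1/2)
  rw [hI_eq_mul_inv_Gamma]
  exact ((hexp.mul hinv).congr_deriv (by ring)).deriv

theorem hII_mul_deriv_hI (n : ℕ) :
    hII η (-(n + 1/2)) * deriv (hI η) (-(n + 1/2)) = (-1) ^ n := by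
  have hshift : -((n : ℂ) + 1/2) + 1/2 = -n := by ring
  rw [hII_apply, neg_neg, hI_natCast_add_half, deriv_hI, hshift, Gamma_neg_nat_eq_zero, inv_zero,
    deriv_inv_Gamma_neg_nat]
  have hexp : exp ((n + 1/2) * Real.log η) * exp (-(n + 1/2) * Real.log η) = 1 := by
    rw [← exp_add]; ring_nf; exact exp_zero
  have hfac : (n ! : ℂ) ≠ 0 := Nat.cast_ne_zero.2 n.factorial_ne_zero
  rw [mul_zero, zero_add, div_mul_eq_mul_div, div_eq_iff hfac]
  linear_combination (-1) ^ n * (n ! : ℂ) * hexp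

theorem hI_mul_deriv_hII (n : ℕ) :
    hI η (n + 1/2) * deriv (hII η) (n + 1/2) = -(-1) ^ n := by
  have h := hII_mul_deriv_hI η n
  rw [hII_apply, neg_neg] at h
  rw [show hII η = fun z => hI η (-z) from rfl, deriv_comp_neg, mul_neg, h]

variable {η} {f g r : ℂ → ℂ}

theorem analyticAt_mulExtend_hI (hf : ∀ z ∉ Zm, AnalyticAt ℂ f z)
    (hr : ∀ x ∈ Zm, Tendsto (fun u => (u - x) * f u) (𝓝[≠] x) (𝓝 (r x))) (z : ℂ) :
    AnalyticAt ℂ (mulExtend f (hI η) r) z :=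
  analyticAt_mulExtend (differentiable_hI η) ⟨_, hI_natCast_add_half_ne_zero η 0⟩
    (fun z hz => hf z (mt (hI_eq_zero_iff η z).2 hz))
    (fun x hx => hr x ((hI_eq_zero_iff η x).1 hx)) z

theorem analyticAt_mulExtend_hII (hf : ∀ z ∉ Zp, AnalyticAt ℂ f z)
    (hr : ∀ x ∈ Zp, Tendsto (fun u => (u - x) * f u) (𝓝[≠] x) (𝓝 (r x))) (z : ℂ) :
    AnalyticAt ℂ (mulExtend f (hII η) r) z :=
  analyticAt_mulExtend (differentiable_hII η)
    ⟨-((0 : ℕ) + 1/2), by rw [hII_apply, neg_neg]; exact hI_natCast_add_half_ne_zero η 0⟩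
    (fun z hz => hf z (mt (hII_eq_zero_iff η z).2 hz))
    (fun x hx => hr x ((hII_eq_zero_iff η x).1 hx)) z

theorem mulExtend_hI_of_notMem {z : ℂ} (hz : z ∉ Zm) :
    mulExtend f (hI η) r z = f z * exp (z * Real.log η) / Gamma (z + 1/2) := by
  rw [mulExtend, if_neg (mt (hI_eq_zero_iff η z).1 hz), hI, mul_div_assoc]

theorem mulExtend_hII_of_notMem {z : ℂ} (hz : z ∉ Zp) :
    mulExtend f (hII η) r z = f z * exp (-z * Real.log η) / Gamma (-z + 1/2) := by
  rw [mulExtend, if_neg (mt (hII_eq_zero_iff η z).1 hz), hII, mul_div_assoc]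

theorem mulExtend_hI_intCast_add_half (k : ℤ) :
    mulExtend f (hI η) (fun x => -(hII η x) ^ 2 * g x) (k + 1/2) =
      (-1) ^ k * mulExtend g (hII η) (fun x => -(hI η x) ^ 2 * f x) (k + 1/2) := by
  cases k with
  | ofNat n =>
    have hI_ne := hI_natCast_add_half_ne_zero η n
    have hII_eq := (hII_eq_zero_iff η _).2 ⟨n, rfl⟩
    have hsq : ((-1 : ℂ) ^ n) ^ 2 = 1 := by rw [← pow_mul, pow_mul', neg_one_sq, one_pow]
    simp only [Int.ofNat_eq_natCast, Int.cast_natCast, zpow_natCast, mulExtend, if_neg hI_ne,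
      if_pos hII_eq]
    linear_combination ((-1) ^ n * hI η (n + 1/2) * f (n + 1/2)) * hI_mul_deriv_hII η n
      - (f (n + 1/2) * hI η (n + 1/2)) * hsq
  | negSucc n =>
    have hI_eq := (hI_eq_zero_iff η _).2 ⟨n, rfl⟩
    have hII_ne : hII η (-(n + 1/2)) ≠ 0 := by
      rw [hII_apply, neg_neg]; exact hI_natCast_add_half_ne_zero η n
    have hsign : (-1 : ℂ) ^ Int.negSucc n = -(-1) ^ n := by
      rw [zpow_negSucc, ← inv_pow, inv_neg, inv_one, pow_succ, mul_neg_one]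
    rw [hsign, Int.cast_negSucc, show -((n + 1 : ℕ) : ℂ) + 1/2 = -(n + 1/2) by push_cast; ring]
    simp only [mulExtend, if_pos hI_eq, if_neg hII_ne]
    linear_combination (-hII η (-(n + 1/2)) * g (-(n + 1/2))) * hII_mul_deriv_hI η n

end Plancherel

theorem statement15_general (η : ℝ) (m11 m12 m21 m22 : ℂ → ℂ)
    (h : PlancherelDRHP η m11 m12 m21 m22) :
    ∃ q11 q12 q21 q22 : ℂ → ℂ,
      (∀ z, AnalyticAt ℂ q11 z) ∧ (∀ z, AnalyticAt ℂ q12 z) ∧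
      (∀ z, AnalyticAt ℂ q21 z) ∧ (∀ z, AnalyticAt ℂ q22 z) ∧
      (∀ z ∉ Zm, q11 z = m11 z * Complex.exp (z * Real.log η) / Complex.Gamma (z + 1/2)) ∧
      (∀ z ∉ Zm, q21 z = m21 z * Complex.exp (z * Real.log η) / Complex.Gamma (z + 1/2)) ∧
      (∀ z ∉ Zp, q12 z = m12 z * Complex.exp (-z * Real.log η) / Complex.Gamma (-z + 1/2)) ∧
      (∀ z ∉ Zp, q22 z = m22 z * Complex.exp (-z * Real.log η) / Complex.Gamma (-z + 1/2)) ∧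
      (∀ n : ℤ, q11 ((n : ℂ) + 1/2) = (-1 : ℂ) ^ n * q12 ((n : ℂ) + 1/2)) ∧
      (∀ n : ℤ, q21 ((n : ℂ) + 1/2) = (-1 : ℂ) ^ n * q22 ((n : ℂ) + 1/2)) := by
  obtain ⟨h11, h21, h12, h22, r11, r21, r12, r22⟩ := h
  exact ⟨mulExtend m11 (hI η) fun x => -(hII η x) ^ 2 * m12 x,
    mulExtend m12 (hII η) fun x => -(hI η x) ^ 2 * m11 x,
    mulExtend m21 (hI η) fun x => -(hII η x) ^ 2 * m22 x,
    mulExtend m22 (hII η) fun x => -(hI η x) ^ 2 * m21 x,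
    analyticAt_mulExtend_hI h11 r11, analyticAt_mulExtend_hII h12 r12,
    analyticAt_mulExtend_hI h21 r21, analyticAt_mulExtend_hII h22 r22,
    fun _ => mulExtend_hI_of_notMem, fun _ => mulExtend_hI_of_notMem,
    fun _ => mulExtend_hII_of_notMem, fun _ => mulExtend_hII_of_notMem,
    mulExtend_hI_intCast_add_half, mulExtend_hI_intCast_add_half⟩

theorem statement15 (η : ℝ) (hη : 0 < η) (m11 m12 m21 m22 : ℂ → ℂ)
    (h : PlancherelDRHP η m11 m12 m21 m22) :
    ∃ q11 q12 q21 q22 : ℂ → ℂ,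
      (∀ z, AnalyticAt ℂ q11 z) ∧ (∀ z, AnalyticAt ℂ q12 z) ∧
      (∀ z, AnalyticAt ℂ q21 z) ∧ (∀ z, AnalyticAt ℂ q22 z) ∧
      (∀ z ∉ Zm, q11 z = m11 z * Complex.exp (z * Real.log η) / Complex.Gamma (z + 1/2)) ∧
      (∀ z ∉ Zm, q21 z = m21 z * Complex.exp (z * Real.log η) / Complex.Gamma (z + 1/2)) ∧
      (∀ z ∉ Zp, q12 z = m12 z * Complex.exp (-z * Real.log η) / Complex.Gamma (-z + 1/2)) ∧
      (∀ z ∉ Zp, q22 z = m22 z * Complex.exp (-z * Real.log η) / Complex.Gamma (-z + 1/2)) ∧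
      (∀ n : ℤ, q11 ((n : ℂ) + 1/2) = (-1 : ℂ) ^ n * q12 ((n : ℂ) + 1/2)) ∧
      (∀ n : ℤ, q21 ((n : ℂ) + 1/2) = (-1 : ℂ) ^ n * q22 ((n : ℂ) + 1/2)) :=
  statement15_general η m11 m12 m21 m22 h
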